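/- arXiv:1006.0277 — 2 statements merged into one kernel-verified Lean document; each statement's English description precedes it below -/
import Mathlib

section
/- Let 0 < p ≤ 1, S_ρ as above. If x, x' ∈ ℝ^m satisfy ‖x − x'‖_2 ≤ t, then |S_ρ(x) − S_ρ(x')| ≤ m^{1−p/2} t^p. -/
/-!
Since `s ↦ s ^ p` is subadditive for `p ≤ 1`, every `k`-subset sum for `x` exceeds the
corresponding sum for `x'` by at most `∑ |x i - x' i| ^ p`, hence so do the suprema. The
power-mean inequality bounds this sum by `m ^ (1 - p / 2) * ‖x - x'‖₂ ^ p`.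
-/

/-- `Srho p k x` is the sum of the `k` largest values among `|x i| ^ p`,
expressed as the supremum over all subsets of cardinality `k` of the sum over the subset. -/
noncomputable def Srho (p : ℝ) (k : ℕ) {m : ℕ} (x : Fin m → ℝ) : ℝ :=
  sSup {s : ℝ | ∃ T : Finset (Fin m), T.card = k ∧ s = ∑ i ∈ T, |x i| ^ p}

open Finset

theorem abs_rpow_sub_abs_rpow_le {p : ℝ} (hp0 : 0 ≤ p) (hp1 : p ≤ 1) (a b : ℝ) :
    |a| ^ p - |b| ^ p ≤ |a - b| ^ p := by
  have h : |a| ≤ |a - b| + |b| := by linarith [abs_sub_abs_le_abs_sub a b]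
  have := calc
    |a| ^ p ≤ (|a - b| + |b|) ^ p := Real.rpow_le_rpow (abs_nonneg a) h hp0
    _ ≤ |a - b| ^ p + |b| ^ p :=
      Real.rpow_add_le_add_rpow (abs_nonneg _) (abs_nonneg _) hp0 hp1
  linarith

/-- Power-mean inequality with exponent `2 / p`, applied to the numbers `|z i| ^ p`. -/
theorem sum_abs_rpow_le_card_rpow_mul_sqrt_sum_sq {ι : Type*} [Fintype ι] {p : ℝ}
    (hp0 : 0 < p) (hp2 : p ≤ 2) (z : ι → ℝ) :
    ∑ i, |z i| ^ p ≤ (Fintype.card ι : ℝ) ^ (1 - p / 2) * √(∑ i, z i ^ 2) ^ p := by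
  have hq : 1 ≤ 2 / p := by rw [le_div_iff₀ hp0]; linarith
  have hpow : ∀ i, (|z i| ^ p) ^ (2 / p) = z i ^ 2 := fun i => by
    rw [← Real.rpow_mul (abs_nonneg _), mul_div_cancel₀ _ hp0.ne', Real.rpow_two, sq_abs]
  have hmean := Real.rpow_sum_le_const_mul_sum_rpow_of_nonneg univ hq
    (f := fun i => |z i| ^ p) (fun i _ => by positivity)
  simp only [hpow, card_univ] at hmean
  calc ∑ i, |z i| ^ p = ((∑ i, |z i| ^ p) ^ (2 / p)) ^ (p / 2) := by
        rw [← Real.rpow_mul (by positivity), div_mul_div_cancel₀ hp0.ne', div_self two_ne_zero,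
          Real.rpow_one]
    _ ≤ ((Fintype.card ι : ℝ) ^ (2 / p - 1) * ∑ i, z i ^ 2) ^ (p / 2) := by gcongr
    _ = (Fintype.card ι : ℝ) ^ (1 - p / 2) * √(∑ i, z i ^ 2) ^ p := by
        rw [Real.mul_rpow (by positivity) (by positivity), ← Real.rpow_mul (by positivity),
          Real.sqrt_eq_rpow, ← Real.rpow_mul (by positivity)]
        congr 2 <;> field_simp

section Srho

variable {p : ℝ} {k m : ℕ}

theorem sum_le_Srho (x : Fin m → ℝ) {T : Finset (Fin m)} (hT : T.card = k) :
    ∑ i ∈ T, |x i| ^ p ≤ Srho p k x := by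
  refine le_csSup ((Set.finite_range fun T : Finset (Fin m) => ∑ i ∈ T, |x i| ^ p).subset ?_
    |>.bddAbove) ⟨T, hT, rfl⟩
  rintro _ ⟨T, -, rfl⟩
  exact ⟨T, rfl⟩

theorem Srho_le_add (hp0 : 0 ≤ p) (hp1 : p ≤ 1) (hk : k ≤ m) (x y : Fin m → ℝ) :
    Srho p k x ≤ Srho p k y + ∑ i, |x i - y i| ^ p := by
  obtain ⟨T₀, -, hT₀⟩ := exists_subset_card_eq (s := (univ : Finset (Fin m)))
    (by simpa using hk)
  refine csSup_le ⟨_, T₀, hT₀, rfl⟩ ?_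
  rintro _ ⟨T, hT, rfl⟩
  calc ∑ i ∈ T, |x i| ^ p
      = ∑ i ∈ T, |y i| ^ p + ∑ i ∈ T, (|x i| ^ p - |y i| ^ p) := by
        rw [sum_sub_distrib]; ring
    _ ≤ Srho p k y + ∑ i, |x i - y i| ^ p := by
        gcongr
        · exact sum_le_Srho y hT
        · calc ∑ i ∈ T, (|x i| ^ p - |y i| ^ p) ≤ ∑ i ∈ T, |x i - y i| ^ p :=
                sum_le_sum fun i _ => abs_rpow_sub_abs_rpow_le hp0 hp1 _ _
            _ ≤ ∑ i, |x i - y i| ^ p :=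
                sum_le_sum_of_subset_of_nonneg (subset_univ T) fun i _ _ => by positivity

theorem abs_Srho_sub_le (hp0 : 0 ≤ p) (hp1 : p ≤ 1) (hk : k ≤ m) (x y : Fin m → ℝ) :
    |Srho p k x - Srho p k y| ≤ ∑ i, |x i - y i| ^ p := by
  have hxy := Srho_le_add hp0 hp1 hk x y
  have hyx := Srho_le_add hp0 hp1 hk y x
  simp only [abs_sub_comm (y _)] at hyx
  exact abs_sub_le_iff.mpr ⟨by linarith, by linarith⟩

end Srho

theorem stmt_4_general (p ρ t : ℝ) (hp0 : 0 < p) (hp1 : p ≤ 1) (hρ1 : ρ ≤ 1)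
    (m : ℕ) (x x' : Fin m → ℝ)
    (hdist : Real.sqrt (∑ i, (x i - x' i) ^ 2) ≤ t) :
    |Srho p ⌈ρ * m⌉₊ x - Srho p ⌈ρ * m⌉₊ x'| ≤ (m : ℝ) ^ (1 - p / 2) * t ^ p := by
  have hk : ⌈ρ * m⌉₊ ≤ m := Nat.ceil_le.mpr (mul_le_of_le_one_left (Nat.cast_nonneg m) hρ1)
  calc |Srho p ⌈ρ * m⌉₊ x - Srho p ⌈ρ * m⌉₊ x'| ≤ ∑ i, |x i - x' i| ^ p :=
        abs_Srho_sub_le hp0.le hp1 hk x x'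
    _ ≤ (m : ℝ) ^ (1 - p / 2) * √(∑ i, (x i - x' i) ^ 2) ^ p := by
        simpa using sum_abs_rpow_le_card_rpow_mul_sqrt_sum_sq hp0 (by linarith) (x - x')
    _ ≤ (m : ℝ) ^ (1 - p / 2) * t ^ p := by gcongr

theorem stmt_4 (p ρ t : ℝ) (hp0 : 0 < p) (hp1 : p ≤ 1) (hρ0 : 0 < ρ) (hρ1 : ρ ≤ 1)
    (ht : 0 ≤ t) (m : ℕ) (x x' : Fin m → ℝ)
    (hdist : Real.sqrt (∑ i, (x i - x' i) ^ 2) ≤ t) :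
    |Srho p ⌈ρ * m⌉₊ x - Srho p ⌈ρ * m⌉₊ x'| ≤ (m : ℝ) ^ (1 - p / 2) * t ^ p :=
  stmt_4_general p ρ t hp0 hp1 hρ1 m x x' hdist
end

section
/- With z*(p) defined by ∫_0^{z*} x^p f(x) dx = ∫_{z*}^∞ x^p f(x) dx for the half-Gaussian density f, the derivative of ρ*(p) = 1 − F(z*(p)) with respect to p equals (∫_0^{z*} x^p (ln x) f(x) dx − ∫_{z*}^∞ x^p (ln x) f(x) dx) / (2 (z*)^p), and this quantity is negative. -/
/-
Differentiate the balance equation `2 ∫₀^{z*(q)} x^q f = ∫₀^∞ x^q f`, which holds for all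
`q ∈ (0, 1]`, at `q = p`: the left side contributes `2 (A + z*'(p) (z*)^p f(z*))` (differentiation
under the integral plus the moving endpoint), the right side `A + B`, where `A` and `B` are the
log-weighted integrals over `(0, z*]` and `(z*, ∞)`. Hence `-f(z*) z*'(p) = (A - B) / (2 (z*)^p)`,
which is the derivative of `1 - F(z*(q))`. Since both halves carry the same mass `m` of `x^p f`
and `log` is increasing, `A ≤ m log z* < B`.
-/

open MeasureTheory

/-- Density of `|X|` for `X` standard Gaussian. -/
noncomputable def halfGaussianPdf (z : ℝ) : ℝ :=
  Real.sqrt (2 / Real.pi) * Real.exp (-z ^ 2 / 2)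

/-- C.d.f. of `|X|` for `X` standard Gaussian. -/
noncomputable def halfGaussianCdf (x : ℝ) : ℝ :=
  ∫ t in (0:ℝ)..x, halfGaussianPdf t

open Set Filter Topology Asymptotics Real

theorem abs_log_le_rpow_add_rpow_neg {x ε : ℝ} (hx : 0 < x) (hε : 0 < ε) :
    |log x| ≤ (x ^ ε + x ^ (-ε)) / ε := by
  have hpos := log_le_rpow_div hx.le hε
  have hneg := log_le_rpow_div (inv_nonneg.mpr hx.le) hε
  rw [log_inv, inv_rpow hx.le, ← rpow_neg hx.le] at hneg
  have h1 : 0 ≤ x ^ ε / ε := by positivity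
  have h2 : 0 ≤ x ^ (-ε) / ε := by positivity
  rw [add_div, abs_le]
  constructor <;> linarith

theorem rpow_le_rpow_add_rpow {x a b e : ℝ} (hx : 0 < x) (ha : a ≤ e) (hb : e ≤ b) :
    x ^ e ≤ x ^ a + x ^ b := by
  rcases le_total x 1 with h | h
  · exact (rpow_le_rpow_of_exponent_ge hx h ha).trans (le_add_of_nonneg_right (by positivity))
  · exact (rpow_le_rpow_of_exponent_le h hb).trans (le_add_of_nonneg_left (by positivity))

theorem abs_rpow_mul_log_le {p q x : ℝ} (hx : 0 < x) (hq : |q - p| < p / 2) :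
    |x ^ q * log x| ≤ 8 / p * (x ^ (p / 4) + x ^ (2 * p)) := by
  obtain ⟨hq₁, hq₂⟩ := abs_lt.mp hq
  have hp : 0 < p := by linarith [abs_nonneg (q - p)]
  calc |x ^ q * log x| = x ^ q * |log x| := by rw [abs_mul, abs_of_pos (rpow_pos_of_pos hx q)]
    _ ≤ x ^ q * ((x ^ (p / 4) + x ^ (-(p / 4))) / (p / 4)) :=
        mul_le_mul_of_nonneg_left (abs_log_le_rpow_add_rpow_neg hx (by positivity)) (by positivity)
    _ = 4 / p * (x ^ (q + p / 4) + x ^ (q + -(p / 4))) := by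
        rw [rpow_add hx, rpow_add hx]; field_simp
    _ ≤ 4 / p * ((x ^ (p / 4) + x ^ (2 * p)) + (x ^ (p / 4) + x ^ (2 * p))) := by
        gcongr <;> exact rpow_le_rpow_add_rpow hx (by linarith) (by linarith)
    _ = 8 / p * (x ^ (p / 4) + x ^ (2 * p)) := by ring

theorem hasDerivAt_intervalIntegral_of_continuousAt_uncurry {E : Type*} [NormedAddCommGroup E]
    [NormedSpace ℝ E] [CompleteSpace E] {u : ℝ → ℝ → E} {ζ : ℝ → ℝ} {p c : ℝ}
    (hζ : HasDerivAt ζ c p)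
    (hu : ∀ᶠ q in 𝓝 p, Continuous (u q)) (hcont : ContinuousAt (Function.uncurry u) (p, ζ p)) :
    HasDerivAt (fun q => ∫ x in ζ p..ζ q, u q x) (c • u p (ζ p)) p := by
  -- between `ζ p` and `ζ q` the integrand is uniformly close to `u p (ζ p)`
  have hsmall : (fun q => (∫ x in ζ p..ζ q, u q x) - (ζ q - ζ p) • u p (ζ p)) =o[𝓝 p]
      fun q => ζ q - ζ p := by
    refine IsLittleO.of_bound fun ε hε => ?_
    obtain ⟨δ, hδ, hball⟩ := Metric.continuousAt_iff.mp hcont ε hε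
    filter_upwards [hu, Metric.ball_mem_nhds p hδ,
      hζ.continuousAt.preimage_mem_nhds (Metric.ball_mem_nhds (ζ p) hδ)] with q hq hqp hζq
    rw [← intervalIntegral.integral_const, ← intervalIntegral.integral_sub
      (hq.intervalIntegrable _ _) intervalIntegrable_const, Real.norm_eq_abs]
    refine intervalIntegral.norm_integral_le_of_norm_le_const fun x hx => ?_
    have hxz : dist x (ζ p) < δ := by
      rw [dist_comm]
      exact (Real.dist_left_le_of_mem_uIcc (uIoc_subset_uIcc hx)).trans_lt (by rwa [dist_comm])
    rw [← dist_eq_norm]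
    have hqx : dist (q, x) (p, ζ p) < δ := by rw [Prod.dist_eq]; exact max_lt hqp hxz
    exact (hball hqx).le
  have hrem : HasDerivAt (fun q => (∫ x in ζ p..ζ q, u q x) - (ζ q - ζ p) • u p (ζ p)) 0 p := by
    rw [hasDerivAt_iff_isLittleO]
    simpa using hsmall.trans_isBigO hζ.isBigO_sub
  convert hrem.add ((hζ.sub_const (ζ p)).smul_const (u p (ζ p))) using 1
  · ext q; simp
  · simp

theorem setIntegral_Ioi_pos_of_pos {f : ℝ → ℝ} {z : ℝ} (hf : IntegrableOn f (Ioi z))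
    (hpos : ∀ x ∈ Ioi z, 0 < f x) : 0 < ∫ x in Ioi z, f x := by
  rw [setIntegral_pos_iff_support_of_nonneg_ae
    ((ae_restrict_iff' measurableSet_Ioi).mpr (Eventually.of_forall fun x hx => (hpos x hx).le)) hf,
    inter_eq_right.mpr fun x hx => Function.mem_support.mpr (hpos x hx).ne', Real.volume_Ioi]
  exact ENNReal.zero_lt_top

theorem integral_mul_lt_integral_Ioi_mul_of_integral_eq {g φ : ℝ → ℝ} {z : ℝ} (hz : 0 < z)
    (hφ : StrictMonoOn φ (Ioi 0)) (hg0 : ∀ x ∈ Ioc 0 z, 0 ≤ g x) (hgpos : ∀ x ∈ Ioi z, 0 < g x)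
    (hg : IntegrableOn g (Ioi 0)) (hgφ : IntegrableOn (fun x => g x * φ x) (Ioi 0))
    (heq : ∫ x in 0..z, g x = ∫ x in Ioi z, g x) :
    ∫ x in 0..z, g x * φ x < ∫ x in Ioi z, g x * φ x := by
  rw [intervalIntegral.integral_of_le hz.le] at heq ⊢
  have hIoc : ∫ x in Ioc 0 z, g x * φ x ≤ (∫ x in Ioc 0 z, g x) * φ z := by
    rw [← integral_mul_const]
    exact setIntegral_mono_on (hgφ.mono_set Ioc_subset_Ioi_self)
      ((hg.mono_set Ioc_subset_Ioi_self).mul_const _) measurableSet_Ioc fun x hx =>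
        mul_le_mul_of_nonneg_left (hφ.monotoneOn hx.1 hz hx.2) (hg0 x hx)
  have hIoi : (∫ x in Ioi z, g x) * φ z < ∫ x in Ioi z, g x * φ x := by
    have hsub := Ioi_subset_Ioi hz.le
    rw [← sub_pos, ← integral_mul_const,
      ← integral_sub (hgφ.mono_set hsub) ((hg.mono_set hsub).mul_const _)]
    refine setIntegral_Ioi_pos_of_pos ((hgφ.mono_set hsub).sub ((hg.mono_set hsub).mul_const _))
      fun x hx => ?_
    rw [← mul_sub]
    exact mul_pos (hgpos x hx) (sub_pos.mpr (hφ hz (hz.trans hx) hx))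
  rw [heq] at hIoc
  linarith

theorem continuous_halfGaussianPdf : Continuous halfGaussianPdf := by
  unfold halfGaussianPdf; fun_prop

theorem halfGaussianPdf_pos (x : ℝ) : 0 < halfGaussianPdf x := by
  unfold halfGaussianPdf; positivity

theorem continuous_rpow_mul_halfGaussianPdf {q : ℝ} (hq : 0 ≤ q) :
    Continuous fun x : ℝ => x ^ q * halfGaussianPdf x :=
  (continuous_rpow_const hq).mul continuous_halfGaussianPdf

theorem continuousAt_uncurry_rpow_mul_halfGaussianPdf {p : ℝ} (hp : 0 < p) (z : ℝ) :
    ContinuousAt (Function.uncurry fun (q x : ℝ) => x ^ q * halfGaussianPdf x) (p, z) :=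
  (continuousAt_snd.rpow continuousAt_fst (Or.inr hp)).mul
    (continuous_halfGaussianPdf.continuousAt.comp continuousAt_snd)

theorem integrableOn_rpow_mul_halfGaussianPdf {s : ℝ} (hs : -1 < s) :
    IntegrableOn (fun x : ℝ => x ^ s * halfGaussianPdf x) (Ioi 0) := by
  have h : IntegrableOn (fun x : ℝ => √(2 / π) * (x ^ s * exp (-(1 / 2) * x ^ 2))) (Ioi 0) :=
    (integrableOn_rpow_mul_exp_neg_mul_sq (by norm_num) hs).const_mul _
  refine h.congr_fun (fun x _ => ?_) measurableSet_Ioi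
  simp only [halfGaussianPdf]
  ring_nf

theorem hasDerivAt_setIntegral_rpow_mul_halfGaussianPdf {p : ℝ} (hp : 0 < p) {S : Set ℝ}
    (hS : MeasurableSet S) (hSpos : S ⊆ Ioi 0) :
    IntegrableOn (fun x => x ^ p * log x * halfGaussianPdf x) S ∧
    HasDerivAt (fun q => ∫ x in S, x ^ q * halfGaussianPdf x)
      (∫ x in S, x ^ p * log x * halfGaussianPdf x) p := by
  have hbound : IntegrableOn
      (fun x => 8 / p * (x ^ (p / 4) + x ^ (2 * p)) * halfGaussianPdf x) S := by
    have h : IntegrableOn (fun x => 8 / p * (x ^ (p / 4) * halfGaussianPdf x +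
        x ^ (2 * p) * halfGaussianPdf x)) (Ioi 0) :=
      ((integrableOn_rpow_mul_halfGaussianPdf (by linarith)).add
        (integrableOn_rpow_mul_halfGaussianPdf (by linarith))).const_mul _
    exact (h.mono_set hSpos).congr_fun (fun x _ => by ring) hS
  refine hasDerivAt_integral_of_dominated_loc_of_deriv_le (μ := volume.restrict S)
    (F := fun q x => x ^ q * halfGaussianPdf x)
    (Metric.ball_mem_nhds p (half_pos hp)) (Eventually.of_forall fun q => ?_)
    ((integrableOn_rpow_mul_halfGaussianPdf (by linarith)).mono_set hSpos) ?_
    ((ae_restrict_iff' hS).mpr (Eventually.of_forall fun x hx q hq => ?_)) hbound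
    ((ae_restrict_iff' hS).mpr (Eventually.of_forall fun x hx q _ =>
      (hasStrictDerivAt_const_rpow (hSpos hx) q).hasDerivAt.mul_const _))
  · exact ContinuousOn.aestronglyMeasurable (fun x hx =>
      ((continuousAt_rpow_const x q (Or.inl (hSpos hx).ne')).mul
        continuous_halfGaussianPdf.continuousAt).continuousWithinAt) hS
  · exact ContinuousOn.aestronglyMeasurable (fun x hx =>
      (((continuousAt_rpow_const x p (Or.inl (hSpos hx).ne')).mul
        (continuousAt_log (hSpos hx).ne')).mul
          continuous_halfGaussianPdf.continuousAt).continuousWithinAt) hS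
  · rw [norm_mul, Real.norm_eq_abs, Real.norm_of_nonneg (halfGaussianPdf_pos x).le]
    exact mul_le_mul_of_nonneg_right (abs_rpow_mul_log_le (hSpos hx) hq)
      (halfGaussianPdf_pos x).le

theorem hasDerivAt_intervalIntegral_rpow_mul_halfGaussianPdf {ζ : ℝ → ℝ} {p c : ℝ} (hp : 0 < p)
    (hζp : 0 ≤ ζ p) (hζ : HasDerivAt ζ c p) :
    HasDerivAt (fun q => ∫ x in 0..ζ q, x ^ q * halfGaussianPdf x)
      ((∫ x in 0..ζ p, x ^ p * log x * halfGaussianPdf x) +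
        c * (ζ p ^ p * halfGaussianPdf (ζ p))) p := by
  have hfixed := (hasDerivAt_setIntegral_rpow_mul_halfGaussianPdf hp (S := Ioc 0 (ζ p))
    measurableSet_Ioc Ioc_subset_Ioi_self).2
  have hmoving := hasDerivAt_intervalIntegral_of_continuousAt_uncurry hζ
    ((lt_mem_nhds hp).mono fun q hq => continuous_rpow_mul_halfGaussianPdf hq.le)
    (continuousAt_uncurry_rpow_mul_halfGaussianPdf hp (ζ p))
  simp only [← intervalIntegral.integral_of_le hζp] at hfixed
  refine (hfixed.add hmoving).congr_of_eventuallyEq ?_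
  filter_upwards [lt_mem_nhds hp] with q hq
  exact (intervalIntegral.integral_add_adjacent_intervals
    ((continuous_rpow_mul_halfGaussianPdf hq.le).intervalIntegrable _ _)
    ((continuous_rpow_mul_halfGaussianPdf hq.le).intervalIntegrable _ _)).symm

theorem stmt_10 (zstar : ℝ → ℝ) (p : ℝ) (hp : p ∈ Set.Ioc (0:ℝ) 1)
    (hzstar : ∀ q ∈ Set.Ioc (0:ℝ) 1, 0 < zstar q ∧
      ∫ x in (0:ℝ)..(zstar q), x ^ q * halfGaussianPdf x =
        ∫ x in Set.Ioi (zstar q), x ^ q * halfGaussianPdf x)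
    (hdiff : DifferentiableAt ℝ zstar p) :
    HasDerivAt (fun q => 1 - halfGaussianCdf (zstar q))
      (((∫ x in (0:ℝ)..(zstar p), x ^ p * Real.log x * halfGaussianPdf x) -
        ∫ x in Set.Ioi (zstar p), x ^ p * Real.log x * halfGaussianPdf x) /
        (2 * (zstar p) ^ p)) p ∧
    ((∫ x in (0:ℝ)..(zstar p), x ^ p * Real.log x * halfGaussianPdf x) -
        ∫ x in Set.Ioi (zstar p), x ^ p * Real.log x * halfGaussianPdf x) /
        (2 * (zstar p) ^ p) < 0 := by
  obtain ⟨hz, hbalance⟩ := hzstar p hp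
  obtain ⟨hlogint, hT⟩ :=
    hasDerivAt_setIntegral_rpow_mul_halfGaussianPdf hp.1 measurableSet_Ioi subset_rfl
  rw [← intervalIntegral.integral_interval_add_Ioi hlogint
    (hlogint.mono_set (Ioi_subset_Ioi hz.le))] at hT
  have hΦ := ((hasDerivAt_intervalIntegral_rpow_mul_halfGaussianPdf hp.1 hz.le
    hdiff.hasDerivAt).const_mul 2).sub hT
  have hvanish : ∀ q ∈ Ioc (0:ℝ) 1, 2 * (∫ x in 0..zstar q, x ^ q * halfGaussianPdf x) -
      ∫ x in Ioi 0, x ^ q * halfGaussianPdf x = 0 := by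
    intro q hq
    obtain ⟨hzq, hbal⟩ := hzstar q hq
    have hint := integrableOn_rpow_mul_halfGaussianPdf (by linarith [hq.1] : (-1:ℝ) < q)
    rw [← intervalIntegral.integral_interval_add_Ioi hint (hint.mono_set (Ioi_subset_Ioi hzq.le)),
      ← hbal]
    ring
  have hD := (uniqueDiffOn_Ioc 0 1 p hp).eq_deriv _ hΦ.hasDerivWithinAt
    ((hasDerivWithinAt_const p _ 0).congr hvanish (hvanish p hp))
  have hAB : (∫ x in (0:ℝ)..(zstar p), x ^ p * Real.log x * halfGaussianPdf x) <
      ∫ x in Set.Ioi (zstar p), x ^ p * Real.log x * halfGaussianPdf x := by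
    have hweight (x : ℝ) (hx : 0 < x) : 0 < x ^ p * halfGaussianPdf x :=
      mul_pos (rpow_pos_of_pos hx p) (halfGaussianPdf_pos x)
    convert integral_mul_lt_integral_Ioi_mul_of_integral_eq
      (g := fun x => x ^ p * halfGaussianPdf x) hz strictMonoOn_log
      (fun x hx => (hweight x hx.1).le) (fun x hx => hweight x (hz.trans hx))
      (integrableOn_rpow_mul_halfGaussianPdf (by linarith [hp.1]))
      (hlogint.congr_fun (fun x _ => by ring) measurableSet_Ioi) hbalance using 3 <;> ring
  have hF := ((continuous_halfGaussianPdf.integral_hasStrictDerivAt 0 (zstar p)).hasDerivAt.comp p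
    hdiff.hasDerivAt).const_sub 1
  have hzp : 0 < zstar p ^ p := rpow_pos_of_pos hz p
  refine ⟨hF.congr_deriv ?_, div_neg_of_neg_of_pos (by linarith) (by positivity)⟩
  field_simp
  linarith
end
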